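/- Let (X,e_X,μ_X) and (Y,e_Y,μ_Y) be NP_i-digital H-spaces (i ∈ {1,2}) which are H-equivalent. If (X,e_X,μ_X) is homotopy-associative, then (Y,e_Y,μ_Y) is homotopy-associative. -/

import Mathlib

/-- A digital image: a finite set with a reflexive, symmetric adjacency relation
(a finite reflexive graph). -/
structure DigImage where
  carrier : Type
  [fintype : Fintype carrier]
  adj : carrier → carrier → Prop
  adj_refl : ∀ x, adj x x
  adj_symm : ∀ {x y}, adj x y → adj y x

attribute [instance] DigImage.fintype

/-- `f : (X,κ) → (Y,λ)` is digitally continuous if it preserves adjacency. -/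
def DigContinuous (X Y : DigImage) (f : X.carrier → Y.carrier) : Prop :=
  ∀ ⦃a b : X.carrier⦄, X.adj a b → Y.adj (f a) (f b)

/-- The product of two digital images with the normal product adjacency `NP_i`
(for `i ≤ 1` this is `NP_1`; otherwise `NP_2`): two pairs are adjacent iff
their coordinates are adjacent in at most `i` positions and equal elsewhere. -/
def DigImage.prod (i : ℕ) (X Y : DigImage) : DigImage where
  carrier := X.carrier × Y.carrier
  adj p q :=
    if i ≤ 1 then (p.1 = q.1 ∧ Y.adj p.2 q.2) ∨ (p.2 = q.2 ∧ X.adj p.1 q.1)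
    else X.adj p.1 q.1 ∧ Y.adj p.2 q.2
  adj_refl p := by
    split_ifs
    · exact Or.inl ⟨rfl, Y.adj_refl p.2⟩
    · exact ⟨X.adj_refl p.1, Y.adj_refl p.2⟩
  adj_symm {p q} h := by
    split_ifs at h ⊢ with hi
    · rcases h with ⟨h1, h2⟩ | ⟨h1, h2⟩
      · exact Or.inl ⟨h1.symm, Y.adj_symm h2⟩
      · exact Or.inr ⟨h1.symm, X.adj_symm h2⟩
    · exact ⟨X.adj_symm h.1, Y.adj_symm h.2⟩

/-- The triple product of digital images with the normal product adjacency `NP_i`: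
coordinates adjacent in at most `i` positions and equal in all other positions. -/
def DigImage.prod3 (i : ℕ) (X Y Z : DigImage) : DigImage where
  carrier := X.carrier × Y.carrier × Z.carrier
  adj p q :=
    if i ≤ 1 then
      (p.1 = q.1 ∧ p.2.1 = q.2.1 ∧ Z.adj p.2.2 q.2.2) ∨
      (p.1 = q.1 ∧ p.2.2 = q.2.2 ∧ Y.adj p.2.1 q.2.1) ∨
      (p.2.1 = q.2.1 ∧ p.2.2 = q.2.2 ∧ X.adj p.1 q.1)
    else
      (p.1 = q.1 ∧ Y.adj p.2.1 q.2.1 ∧ Z.adj p.2.2 q.2.2) ∨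
      (p.2.1 = q.2.1 ∧ X.adj p.1 q.1 ∧ Z.adj p.2.2 q.2.2) ∨
      (p.2.2 = q.2.2 ∧ X.adj p.1 q.1 ∧ Y.adj p.2.1 q.2.1)
  adj_refl p := by
    split_ifs
    · exact Or.inl ⟨rfl, rfl, Z.adj_refl p.2.2⟩
    · exact Or.inl ⟨rfl, Y.adj_refl p.2.1, Z.adj_refl p.2.2⟩
  adj_symm {p q} h := by
    split_ifs at h ⊢ with hi
    · rcases h with ⟨h1, h2, h3⟩ | ⟨h1, h2, h3⟩ | ⟨h1, h2, h3⟩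
      · exact Or.inl ⟨h1.symm, h2.symm, Z.adj_symm h3⟩
      · exact Or.inr (Or.inl ⟨h1.symm, h2.symm, Y.adj_symm h3⟩)
      · exact Or.inr (Or.inr ⟨h1.symm, h2.symm, X.adj_symm h3⟩)
    · rcases h with ⟨h1, h2, h3⟩ | ⟨h1, h2, h3⟩ | ⟨h1, h2, h3⟩
      · exact Or.inl ⟨h1.symm, Y.adj_symm h2, Z.adj_symm h3⟩
      · exact Or.inr (Or.inl ⟨h1.symm, X.adj_symm h2, Z.adj_symm h3⟩)
      · exact Or.inr (Or.inr ⟨h1.symm, X.adj_symm h2, Y.adj_symm h3⟩)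

/-- The digital interval `[0,m]_ℤ` with the standard adjacency `|a−b| ≤ 1`. -/
def digInterval (m : ℕ) : DigImage where
  carrier := Fin (m + 1)
  adj a b := |(a : ℤ) - (b : ℤ)| ≤ 1
  adj_refl a := by simp
  adj_symm {a b} h := by
    have h' : |(a : ℤ) - (b : ℤ)| ≤ 1 := h
    rw [abs_sub_comm] at h'
    exact h'

/-- `f` and `g` are `NP_i`-digitally homotopic: there is an
`NP_i`-continuous `H : X × [0,m]_ℤ → Y` with `H(·,0) = f` and `H(·,m) = g`. -/
def DigHomotopic (i : ℕ) (X Y : DigImage) (f g : X.carrier → Y.carrier) : Prop :=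
  ∃ (m : ℕ) (H : X.carrier × Fin (m + 1) → Y.carrier),
    DigContinuous (DigImage.prod i X (digInterval m)) Y H ∧
    (∀ x, H (x, 0) = f x) ∧ (∀ x, H (x, Fin.last m) = g x)

/-- An `NP_i`-digital H-space `(X,e,μ)`. -/
structure IsHSpace (i : ℕ) (X : DigImage) (e : X.carrier)
    (μ : X.carrier × X.carrier → X.carrier) : Prop where
  continuous : DigContinuous (DigImage.prod i X X) X μ
  right_unit : DigHomotopic i X X (fun x => μ (x, e)) id
  left_unit : DigHomotopic i X X (fun x => μ (e, x)) id

/-- H-equivalence of `NP_i`-digital H-spaces. -/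
def HSpaceEquiv (i : ℕ) (X : DigImage) (eX : X.carrier)
    (μX : X.carrier × X.carrier → X.carrier)
    (Y : DigImage) (eY : Y.carrier)
    (μY : Y.carrier × Y.carrier → Y.carrier) : Prop :=
  ∃ (f : X.carrier → Y.carrier) (g : Y.carrier → X.carrier),
    DigContinuous X Y f ∧ DigContinuous Y X g ∧ f eX = eY ∧ g eY = eX ∧
    DigHomotopic i Y Y (f ∘ g) id ∧ DigHomotopic i X X (g ∘ f) id ∧
    DigHomotopic i (DigImage.prod i X X) Y (fun p => f (μX p)) (fun p => μY (f p.1, f p.2)) ∧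
    DigHomotopic i (DigImage.prod i Y Y) X (fun p => g (μY p)) (fun p => μX (g p.1, g p.2))

/-- `NP_i`-homotopy equivalence of digital images. -/
def DigHtpyEquiv (i : ℕ) (X Y : DigImage) : Prop :=
  ∃ (f : X.carrier → Y.carrier) (g : Y.carrier → X.carrier),
    DigContinuous X Y f ∧ DigContinuous Y X g ∧
    DigHomotopic i X X (g ∘ f) id ∧ DigHomotopic i Y Y (f ∘ g) id

/-- A digital image is `NP_i`-irreducible if it is not `NP_i`-homotopy
equivalent to any digital image with fewer points. -/
def DigIrreducible (i : ℕ) (X : DigImage) : Prop :=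
  ¬ ∃ Y : DigImage, Fintype.card Y.carrier < Fintype.card X.carrier ∧ DigHtpyEquiv i X Y

/-- A digital image is connected if any two points are joined by a path
of consecutively adjacent points. -/
def DigConnected (X : DigImage) : Prop :=
  ∀ a b : X.carrier, Relation.ReflTransGen X.adj a b

/-- A digital image is `NP_i`-contractible if the identity is `NP_i`-homotopic
to a constant map. -/
def DigContractible (i : ℕ) (X : DigImage) : Prop :=
  ∃ c : X.carrier, DigHomotopic i X X id (fun _ => c)

/-- An isomorphism of digital images: a continuous bijection with continuous inverse. -/
def IsDigIso (X Y : DigImage) (f : X.carrier → Y.carrier) : Prop :=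
  DigContinuous X Y f ∧ ∃ g : Y.carrier → X.carrier,
    DigContinuous Y X g ∧ Function.LeftInverse g f ∧ Function.RightInverse g f

/-- The sub-digital-image on the points satisfying `P`, with the induced adjacency. -/
noncomputable def subImage (X : DigImage) (P : X.carrier → Prop) : DigImage where
  carrier := {x : X.carrier // P x}
  fintype := Fintype.ofFinite _
  adj a b := X.adj a.1 b.1
  adj_refl a := X.adj_refl a.1
  adj_symm h := X.adj_symm h

/-- The connected component of `e`, as a digital image. -/
noncomputable def componentImage (X : DigImage) (e : X.carrier) : DigImage :=
  subImage X (fun x => Relation.ReflTransGen X.adj e x)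

/-- Homotopy-associativity of an `NP_i`-digital multiplication:
`μ∘(id × μ) ≃ᵢ μ∘(μ × id)` as maps `X × X × X → X` with `NP_i` adjacency. -/
def HomotopyAssociative (i : ℕ) (X : DigImage)
    (μ : X.carrier × X.carrier → X.carrier) : Prop :=
  DigHomotopic i (DigImage.prod3 i X X X) X
    (fun p => μ (p.1, μ (p.2.1, p.2.2)))
    (fun p => μ (μ (p.1, p.2.1), p.2.2))

/-- `α` is a left homotopy-inverse for the H-space `(X,e,μ)`. -/
def LeftHtpyInverse (i : ℕ) (X : DigImage) (e : X.carrier)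
    (μ : X.carrier × X.carrier → X.carrier) (α : X.carrier → X.carrier) : Prop :=
  DigContinuous X X α ∧ DigContinuous X X (fun x => μ (α x, x)) ∧
  DigHomotopic i X X (fun x => μ (α x, x)) (fun _ => e)

/-- `β` is a right homotopy-inverse for the H-space `(X,e,μ)`. -/
def RightHtpyInverse (i : ℕ) (X : DigImage) (e : X.carrier)
    (μ : X.carrier × X.carrier → X.carrier) (β : X.carrier → X.carrier) : Prop :=
  DigContinuous X X β ∧ DigContinuous X X (fun x => μ (x, β x)) ∧
  DigHomotopic i X X (fun x => μ (x, β x)) (fun _ => e)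

/-!
If `g : Y → X` is continuous, multiplicative up to homotopy, and has a continuous map
`f : X → Y` with `f ∘ g ≃ id`, then associativity up to homotopy transfers from `X` to `Y`:
`a(bc) ≃ fg(a(bc)) ≃ f(g a · (g b · g c)) ≃ f((g a · g b) · g c) ≃ fg((ab)c) ≃ (ab)c`.
Each step uses only that homotopies can be reversed, concatenated, composed on either side and
carried out in one factor of an `NP_i`-product; for this the `NP_i` adjacency must be preserved
by products of continuous maps and by the regroupings of `X × X × X`.
-/

namespace DigImage

variable {i : ℕ}

theorem prod_adj_iff {X Y : DigImage} {p q : (prod i X Y).carrier} :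
    (prod i X Y).adj p q ↔
      X.adj p.1 q.1 ∧ Y.adj p.2 q.2 ∧ (i ≤ 1 → p.1 = q.1 ∨ p.2 = q.2) := by
  obtain ⟨a, b⟩ := p
  obtain ⟨a', b'⟩ := q
  by_cases hi : i ≤ 1
  · simp only [prod, forall_const, hi]
    constructor
    · rintro (⟨rfl, h⟩ | ⟨rfl, h⟩)
      · exact ⟨X.adj_refl a, h, Or.inl rfl⟩
      · exact ⟨h, Y.adj_refl b, Or.inr rfl⟩
    · rintro ⟨ha, hb, rfl | rfl⟩
      exacts [Or.inl ⟨rfl, hb⟩, Or.inr ⟨rfl, ha⟩]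
  · simp [prod, hi]

theorem prod3_adj_iff {X Y Z : DigImage} {p q : (prod3 i X Y Z).carrier} :
    (prod3 i X Y Z).adj p q ↔
      X.adj p.1 q.1 ∧ Y.adj p.2.1 q.2.1 ∧ Z.adj p.2.2 q.2.2 ∧
      (p.1 = q.1 ∨ p.2.1 = q.2.1 ∨ p.2.2 = q.2.2) ∧
      (i ≤ 1 → (p.1 = q.1 ∧ p.2.1 = q.2.1) ∨ (p.1 = q.1 ∧ p.2.2 = q.2.2) ∨
        (p.2.1 = q.2.1 ∧ p.2.2 = q.2.2)) := by
  obtain ⟨a, b, c⟩ := p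
  obtain ⟨a', b', c'⟩ := q
  by_cases hi : i ≤ 1
  · simp only [prod3, forall_const, hi]
    constructor
    · rintro (⟨rfl, rfl, h⟩ | ⟨rfl, rfl, h⟩ | ⟨rfl, rfl, h⟩)
      · exact ⟨X.adj_refl a, Y.adj_refl b, h, Or.inl rfl, Or.inl ⟨rfl, rfl⟩⟩
      · exact ⟨X.adj_refl a, h, Z.adj_refl c, Or.inl rfl, Or.inr (Or.inl ⟨rfl, rfl⟩)⟩
      · exact ⟨h, Y.adj_refl b, Z.adj_refl c, Or.inr (Or.inl rfl), Or.inr (Or.inr ⟨rfl, rfl⟩)⟩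
    · rintro ⟨ha, hb, hc, -, ⟨rfl, rfl⟩ | ⟨rfl, rfl⟩ | ⟨rfl, rfl⟩⟩
      exacts [Or.inl ⟨rfl, rfl, hc⟩, Or.inr (Or.inl ⟨rfl, rfl, hb⟩), Or.inr (Or.inr ⟨rfl, rfl, ha⟩)]
  · simp only [prod3, hi, IsEmpty.forall_iff, and_true]
    constructor
    · rintro (⟨rfl, hb, hc⟩ | ⟨rfl, ha, hc⟩ | ⟨rfl, ha, hb⟩)
      · exact ⟨X.adj_refl a, hb, hc, Or.inl rfl⟩
      · exact ⟨ha, Y.adj_refl b, hc, Or.inr (Or.inl rfl)⟩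
      · exact ⟨ha, hb, Z.adj_refl c, Or.inr (Or.inr rfl)⟩
    · rintro ⟨ha, hb, hc, rfl | rfl | rfl⟩
      exacts [Or.inl ⟨rfl, hb, hc⟩, Or.inr (Or.inl ⟨rfl, ha, hc⟩), Or.inr (Or.inr ⟨rfl, ha, hb⟩)]

theorem digInterval_adj_iff {m : ℕ} {s t : Fin (m + 1)} :
    (digInterval m).adj s t ↔ (s : ℕ) ≤ t + 1 ∧ (t : ℕ) ≤ s + 1 := by
  change |((s : ℕ) : ℤ) - ((t : ℕ) : ℤ)| ≤ 1 ↔ _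
  rw [abs_le]
  omega

end DigImage

open DigImage

section Continuity

variable {i : ℕ} {A B C D : DigImage}

theorem DigContinuous.id : DigContinuous A A id := fun _ _ h => h

theorem DigContinuous.comp {g : B.carrier → C.carrier} {f : A.carrier → B.carrier}
    (hg : DigContinuous B C g) (hf : DigContinuous A B f) : DigContinuous A C (g ∘ f) :=
  fun _ _ h => hg (hf h)

theorem DigContinuous.prodMap {f : A.carrier → C.carrier} {g : B.carrier → D.carrier}
    (hf : DigContinuous A C f) (hg : DigContinuous B D g) :
    DigContinuous (prod i A B) (prod i C D) (Prod.map f g) := by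
  intro p q h
  obtain ⟨h1, h2, heq⟩ := prod_adj_iff.1 h
  exact prod_adj_iff.2 ⟨hf h1, hg h2, fun hi => (heq hi).imp (congrArg f) (congrArg g)⟩

theorem DigContinuous.prodMap3 {f : A.carrier → B.carrier} (hf : DigContinuous A B f) :
    DigContinuous (prod3 i A A A) (prod3 i B B B) (Prod.map f (Prod.map f f)) := by
  rintro ⟨a, b, c⟩ ⟨a', b', c'⟩ h
  obtain ⟨h1, h2, h3, hone, htwo⟩ := prod3_adj_iff.1 h
  refine prod3_adj_iff.2 ⟨hf h1, hf h2, hf h3, ?_, fun hi => ?_⟩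
  · dsimp only [Prod.map] at hone ⊢
    rcases hone with rfl | rfl | rfl <;> simp
  · dsimp only [Prod.map] at htwo ⊢
    rcases htwo hi with ⟨rfl, rfl⟩ | ⟨rfl, rfl⟩ | ⟨rfl, rfl⟩ <;> simp

theorem DigContinuous.prodSwap : DigContinuous (prod i A B) (prod i B A) Prod.swap := by
  intro p q h
  obtain ⟨h1, h2, heq⟩ := prod_adj_iff.1 h
  exact prod_adj_iff.2 ⟨h2, h1, fun hi => (heq hi).symm⟩

theorem DigContinuous.prodAssoc :
    DigContinuous (prod i (prod i A B) C) (prod i A (prod i B C))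
      (fun p => (p.1.1, (p.1.2, p.2))) := by
  intro p q h
  obtain ⟨h12, h3, heq⟩ := prod_adj_iff.1 h
  obtain ⟨h1, h2, heq'⟩ := prod_adj_iff.1 h12
  refine prod_adj_iff.2 ⟨h1, prod_adj_iff.2 ⟨h2, h3, fun hi => ?_⟩, fun hi => ?_⟩
  · exact (heq hi).imp_left (congrArg Prod.snd)
  · rcases heq hi with e | e3
    · exact Or.inl (congrArg Prod.fst e :)
    · exact (heq' hi).imp_right (Prod.ext · e3)

theorem DigContinuous.prod3_to_prod_right :
    DigContinuous (prod3 i A B C) (prod i A (prod i B C)) (fun p => p) := by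
  intro p q h
  obtain ⟨h1, h2, h3, -, htwo⟩ := prod3_adj_iff.1 h
  refine prod_adj_iff.2 ⟨h1, prod_adj_iff.2 ⟨h2, h3, fun hi => ?_⟩, fun hi => ?_⟩ <;>
    rcases htwo hi with ⟨e1, e2⟩ | ⟨e1, e3⟩ | ⟨e2, e3⟩
  exacts [Or.inl e2, Or.inr e3, Or.inl e2, Or.inl e1, Or.inl e1, Or.inr (Prod.ext e2 e3)]

theorem DigContinuous.prod3_to_prod_left :
    DigContinuous (prod3 i A B C) (prod i (prod i A B) C) (fun p => ((p.1, p.2.1), p.2.2)) := by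
  intro p q h
  obtain ⟨h1, h2, h3, -, htwo⟩ := prod3_adj_iff.1 h
  refine prod_adj_iff.2 ⟨prod_adj_iff.2 ⟨h1, h2, fun hi => ?_⟩, h3, fun hi => ?_⟩ <;>
    rcases htwo hi with ⟨e1, e2⟩ | ⟨e1, e3⟩ | ⟨e2, e3⟩
  exacts [Or.inl e1, Or.inl e1, Or.inr e2, Or.inl (Prod.ext e1 e2), Or.inr e3, Or.inr e3]

end Continuity

section Interval

variable {m n : ℕ}

theorem DigContinuous.of_interval {φ : Fin (m + 1) → Fin (n + 1)}
    (hφ : ∀ s t : Fin (m + 1), (s : ℕ) ≤ t + 1 → (t : ℕ) ≤ s + 1 → (φ s : ℕ) ≤ φ t + 1) :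
    DigContinuous (digInterval m) (digInterval n) φ := by
  intro s t h
  obtain ⟨hst, hts⟩ := digInterval_adj_iff.1 h
  exact digInterval_adj_iff.2 ⟨hφ s t hst hts, hφ t s hts hst⟩

theorem DigContinuous.finRev : DigContinuous (digInterval m) (digInterval m) Fin.rev :=
  .of_interval fun s t _ _ => by simp only [Fin.val_rev]; omega

def concatTimeFst (m n : ℕ) (t : Fin (m + n + 1)) : Fin (m + 1) :=
  ⟨min t m, by omega⟩

def concatTimeSnd (m n : ℕ) (t : Fin (m + n + 1)) : Fin (n + 1) :=
  ⟨t - m, by omega⟩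

theorem DigContinuous.concatTimeFst :
    DigContinuous (digInterval (m + n)) (digInterval m) (concatTimeFst m n) :=
  .of_interval fun s t _ _ => by simp only [_root_.concatTimeFst]; omega

theorem DigContinuous.concatTimeSnd :
    DigContinuous (digInterval (m + n)) (digInterval n) (concatTimeSnd m n) :=
  .of_interval fun s t _ _ => by simp only [_root_.concatTimeSnd]; omega

end Interval

namespace DigHomotopic

variable {i : ℕ} {A B C D : DigImage} {u v w : A.carrier → B.carrier}

theorem comp_left (h : DigHomotopic i A B u v) {ψ : B.carrier → C.carrier}
    (hψ : DigContinuous B C ψ) : DigHomotopic i A C (ψ ∘ u) (ψ ∘ v) := by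
  obtain ⟨m, H, hH, h0, h1⟩ := h
  exact ⟨m, ψ ∘ H, hψ.comp hH, fun x => congrArg ψ (h0 x), fun x => congrArg ψ (h1 x)⟩

theorem comp_right (h : DigHomotopic i A B u v) {φ : C.carrier → A.carrier}
    (hφ : DigContinuous C A φ) : DigHomotopic i C B (u ∘ φ) (v ∘ φ) := by
  obtain ⟨m, H, hH, h0, h1⟩ := h
  exact ⟨m, H ∘ Prod.map φ id, hH.comp (hφ.prodMap .id), fun x => h0 (φ x), fun x => h1 (φ x)⟩

theorem symm (h : DigHomotopic i A B u v) : DigHomotopic i A B v u := by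
  obtain ⟨m, H, hH, h0, h1⟩ := h
  refine ⟨m, H ∘ Prod.map id Fin.rev, hH.comp (DigContinuous.id.prodMap .finRev),
    fun x => ?_, fun x => ?_⟩
  · simpa only [Function.comp_apply, Prod.map, id, Fin.rev_zero] using h1 x
  · simpa only [Function.comp_apply, Prod.map, id, Fin.rev_last] using h0 x

theorem trans (h₁ : DigHomotopic i A B u v) (h₂ : DigHomotopic i A B v w) :
    DigHomotopic i A B u w := by
  obtain ⟨m, H₁, hH₁, h₁0, h₁1⟩ := h₁
  obtain ⟨n, H₂, hH₂, h₂0, h₂1⟩ := h₂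
  let H : A.carrier × Fin (m + n + 1) → B.carrier := fun p =>
    if (p.2 : ℕ) ≤ m then H₁ (p.1, concatTimeFst m n p.2) else H₂ (p.1, concatTimeSnd m n p.2)
  have H_fst : ∀ p : A.carrier × Fin (m + n + 1), (p.2 : ℕ) ≤ m →
      H p = (H₁ ∘ Prod.map id (concatTimeFst m n)) p := fun p hp => if_pos hp
  -- at time `m` both pieces equal `v`
  have H_snd : ∀ p : A.carrier × Fin (m + n + 1), m ≤ (p.2 : ℕ) →
      H p = (H₂ ∘ Prod.map id (concatTimeSnd m n)) p := by
    intro p hp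
    by_cases hpm : (p.2 : ℕ) ≤ m
    · have hfst : concatTimeFst m n p.2 = Fin.last m := Fin.ext (by simp only [concatTimeFst, Fin.val_last]; omega)
      have hsnd : concatTimeSnd m n p.2 = 0 := Fin.ext (by simp only [concatTimeSnd, Fin.val_zero]; omega)
      simp only [H, if_pos hpm, hfst, h₁1, Function.comp_apply, Prod.map, id, hsnd, h₂0]
    · exact if_neg hpm
  refine ⟨m + n, H, fun (p q : A.carrier × Fin (m + n + 1)) hpq => ?_, fun x => ?_, fun x => ?_⟩
  · have hT := digInterval_adj_iff.1 (prod_adj_iff.1 hpq).2.1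
    by_cases hle : (p.2 : ℕ) ≤ m ∧ (q.2 : ℕ) ≤ m
    · rw [H_fst p hle.1, H_fst q hle.2]
      exact (hH₁.comp (DigContinuous.id.prodMap .concatTimeFst)) hpq
    · rw [H_snd p (by omega), H_snd q (by omega)]
      exact (hH₂.comp (DigContinuous.id.prodMap .concatTimeSnd)) hpq
  · rw [H_fst (x, 0) (Nat.zero_le m)]
    exact h₁0 x
  · rw [H_snd (x, Fin.last (m + n)) (by simp)]
    have hsnd : concatTimeSnd m n (Fin.last (m + n)) = Fin.last n :=
      Fin.ext (by simp only [concatTimeSnd, Fin.val_last]; omega)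
    simp only [Function.comp_apply, Prod.map, id, hsnd, h₂1]

theorem prodMap_right {f : C.carrier → D.carrier} (hf : DigContinuous C D f)
    (h : DigHomotopic i A B u v) :
    DigHomotopic i (prod i C A) (prod i D B) (Prod.map f u) (Prod.map f v) := by
  obtain ⟨m, H, hH, h0, h1⟩ := h
  exact ⟨m, Prod.map f H ∘ fun p => (p.1.1, (p.1.2, p.2)), (hf.prodMap hH).comp .prodAssoc,
    fun x => Prod.ext rfl (h0 x.2), fun x => Prod.ext rfl (h1 x.2)⟩

theorem prodMap_left (h : DigHomotopic i A B u v) {f : C.carrier → D.carrier}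
    (hf : DigContinuous C D f) :
    DigHomotopic i (prod i A C) (prod i B D) (Prod.map u f) (Prod.map v f) :=
  ((h.prodMap_right hf).comp_right .prodSwap).comp_left .prodSwap

theorem cancel_left {f : A.carrier → B.carrier} {g : B.carrier → A.carrier}
    (hf : DigContinuous A B f) (hfg : DigHomotopic i B B (f ∘ g) id)
    {φ ψ : C.carrier → B.carrier} (hφ : DigContinuous C B φ) (hψ : DigContinuous C B ψ)
    (h : DigHomotopic i C A (g ∘ φ) (g ∘ ψ)) : DigHomotopic i C B φ ψ :=
  ((hfg.comp_right hφ).symm.trans (h.comp_left hf)).trans (hfg.comp_right hψ)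

end DigHomotopic

def IsHMap (i : ℕ) (X : DigImage) (μX : X.carrier × X.carrier → X.carrier)
    (Y : DigImage) (μY : Y.carrier × Y.carrier → Y.carrier) (g : X.carrier → Y.carrier) : Prop :=
  DigContinuous X Y g ∧
    DigHomotopic i (prod i X X) Y (fun p => g (μX p)) (fun p => μY (g p.1, g p.2))

section HMap

variable {i : ℕ} {X Y : DigImage} {μX : X.carrier × X.carrier → X.carrier}
  {μY : Y.carrier × Y.carrier → Y.carrier} {g : Y.carrier → X.carrier}

theorem DigContinuous.mul_mul_right (hμ : DigContinuous (prod i Y Y) Y μY) :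
    DigContinuous (prod3 i Y Y Y) Y (fun p => μY (p.1, μY p.2)) :=
  (hμ.comp (DigContinuous.id.prodMap hμ)).comp .prod3_to_prod_right

theorem DigContinuous.mul_mul_left (hμ : DigContinuous (prod i Y Y) Y μY) :
    DigContinuous (prod3 i Y Y Y) Y (fun p => μY (μY (p.1, p.2.1), p.2.2)) :=
  (hμ.comp (hμ.prodMap .id)).comp .prod3_to_prod_left

theorem IsHMap.map_mul_mul_right (hg : IsHMap i Y μY X μX g)
    (hμY : DigContinuous (prod i Y Y) Y μY) (hμX : DigContinuous (prod i X X) X μX) :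
    DigHomotopic i (prod3 i Y Y Y) X (fun p => g (μY (p.1, μY p.2)))
      (fun p => μX (g p.1, μX (g p.2.1, g p.2.2))) :=
  (hg.2.comp_right ((DigContinuous.id.prodMap hμY).comp .prod3_to_prod_right)).trans
    (((hg.2.prodMap_right hg.1).comp_left hμX).comp_right .prod3_to_prod_right)

theorem IsHMap.map_mul_mul_left (hg : IsHMap i Y μY X μX g)
    (hμY : DigContinuous (prod i Y Y) Y μY) (hμX : DigContinuous (prod i X X) X μX) :
    DigHomotopic i (prod3 i Y Y Y) X (fun p => g (μY (μY (p.1, p.2.1), p.2.2)))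
      (fun p => μX (μX (g p.1, g p.2.1), g p.2.2)) :=
  (hg.2.comp_right ((hμY.prodMap .id).comp .prod3_to_prod_left)).trans
    (((hg.2.prodMap_left hg.1).comp_left hμX).comp_right .prod3_to_prod_left)

theorem HomotopyAssociative.of_isHMap (hX : HomotopyAssociative i X μX)
    (hμY : DigContinuous (prod i Y Y) Y μY) (hμX : DigContinuous (prod i X X) X μX)
    (hg : IsHMap i Y μY X μX g) {f : X.carrier → Y.carrier} (hf : DigContinuous X Y f)
    (hfg : DigHomotopic i Y Y (f ∘ g) id) : HomotopyAssociative i Y μY :=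
  DigHomotopic.cancel_left hf hfg hμY.mul_mul_right hμY.mul_mul_left <|
    ((hg.map_mul_mul_right hμY hμX).trans (hX.comp_right hg.1.prodMap3)).trans
      (hg.map_mul_mul_left hμY hμX).symm

end HMap

theorem hequiv_homotopy_associative_general (i : ℕ)
    (X : DigImage) (eX : X.carrier) (μX : X.carrier × X.carrier → X.carrier)
    (Y : DigImage) (eY : Y.carrier) (μY : Y.carrier × Y.carrier → Y.carrier)
    (hX : IsHSpace i X eX μX) (hY : IsHSpace i Y eY μY)
    (heq : HSpaceEquiv i X eX μX Y eY μY)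
    (hassoc : HomotopyAssociative i X μX) :
    HomotopyAssociative i Y μY := by
  obtain ⟨f, g, hf, hg, -, -, hfg, -, -, hgμ⟩ := heq
  exact hassoc.of_isHMap hY.continuous hX.continuous ⟨hg, hgμ⟩ hf hfg

/-- H-equivalence preserves homotopy-associativity. -/
theorem hequiv_homotopy_associative (i : ℕ) (hi : i = 1 ∨ i = 2)
    (X : DigImage) (eX : X.carrier) (μX : X.carrier × X.carrier → X.carrier)
    (Y : DigImage) (eY : Y.carrier) (μY : Y.carrier × Y.carrier → Y.carrier)
    (hX : IsHSpace i X eX μX) (hY : IsHSpace i Y eY μY)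
    (heq : HSpaceEquiv i X eX μX Y eY μY)
    (hassoc : HomotopyAssociative i X μX) :
    HomotopyAssociative i Y μY :=
  hequiv_homotopy_associative_general i X eX μX Y eY μY hX hY heq hassoc
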